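/- For an admissible pair (x, ε) with d even, the vector x − ν, where ν = (ε,…,ε,−ε,…,−ε) has d/2 entries ε followed by d/2 entries −ε, is the minimum of B^∞_ε(x) with respect to majorization: x − ν ∈ B^∞_ε(x) and x' ⪰ x − ν for every x' ∈ B^∞_ε(x). -/
import Mathlib


open Finset

/-- Partial sum of the first `k` components of `x`. -/
def psum (d : ℕ) (x : Fin d → ℝ) (k : ℕ) : ℝ :=
  ∑ i ∈ Finset.univ.filter (fun i : Fin d => (i : ℕ) < k), x i

/-- The ordered probability simplex `Δ_d↓`. -/
def Simplex (d : ℕ) (x : Fin d → ℝ) : Prop :=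
  (∀ i j : Fin d, i ≤ j → x j ≤ x i) ∧ (∀ i, 0 ≤ x i) ∧ ∑ i, x i = 1

/-- Majorization: all partial sums of `x` dominate those of `y`. -/
def Maj (d : ℕ) (x y : Fin d → ℝ) : Prop :=
  ∀ k : ℕ, psum d y k ≤ psum d x k

/-- ℓ∞ distance. -/
noncomputable def dInf (d : ℕ) (x y : Fin d → ℝ) : ℝ := ⨆ i, |x i - y i|

/-- ℓ¹ distance. -/
def dOne (d : ℕ) (x y : Fin d → ℝ) : ℝ := ∑ i, |x i - y i|

/-- Extended vector: `ext d x 0 = 1`, `ext d x n = x (n-1)` for `1 ≤ n ≤ d`, and `0` beyond. -/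
noncomputable def ext (d : ℕ) (x : Fin d → ℝ) : ℕ → ℝ :=
  fun n => if h0 : n = 0 then 1 else if h : n ≤ d then x ⟨n - 1, by omega⟩ else 0

/-- An admissible pair `(x, ε)`: strictly decreasing probability vector with all gaps
(including the boundary gaps to 1 and 0) at least `2ε`. -/
def Admissible (d : ℕ) (x : Fin d → ℝ) (ε : ℝ) : Prop :=
  0 < ε ∧ (∑ i, x i = 1) ∧
    (∀ n ≤ d, ext d x (n + 1) < ext d x n) ∧
    (∀ n ≤ d, 2 * ε ≤ ext d x n - ext d x (n + 1))

/-- The vector with first `d/2` entries `ε` and last `d/2` entries `-ε`. -/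
def nuvec (d : ℕ) (ε : ℝ) : Fin d → ℝ := fun i => if (i : ℕ) < d / 2 then ε else -ε

theorem admissible_min_of_linf_ball (d : ℕ) (hd : 0 < d) (hdeven : Even d)
    (x : Fin d → ℝ) (hx : Simplex d x) (ε : ℝ) (hadm : Admissible d x ε) :
    (Simplex d (fun i => x i - nuvec d ε i) ∧
      dInf d (fun i => x i - nuvec d ε i) x ≤ ε) ∧
    (∀ x' : Fin d → ℝ, Simplex d x' → dInf d x' x ≤ ε →
      Maj d x' (fun i => x i - nuvec d ε i)) := by
  obtain ⟨hdec, hnn, hsum⟩ := hx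
  obtain ⟨hε, -, -, hgap⟩ := hadm
  obtain ⟨m, hm⟩ := hdeven
  have hdm : d = 2 * m := by omega
  have hm1 : 1 ≤ m := by omega
  have hd2 : d / 2 = m := by omega
  -- gap at the middle
  have h1 : 2 * ε ≤ x ⟨m - 1, by omega⟩ - x ⟨m, by omega⟩ := by
    have h := hgap m (by omega)
    simp only [_root_.ext] at h
    rw [dif_neg (by omega), dif_pos (by omega), dif_neg (by omega),
      dif_pos (by omega : m + 1 ≤ d)] at h
    have e : (⟨m + 1 - 1, by omega⟩ : Fin d) = ⟨m, by omega⟩ := by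
      apply Fin.ext; simp
    rw [e] at h
    exact h
  -- last entry is at least 2ε
  have hlast : 2 * ε ≤ x ⟨d - 1, by omega⟩ := by
    have h := hgap d le_rfl
    simp only [_root_.ext] at h
    rw [dif_neg (by omega), dif_pos le_rfl, dif_neg (by omega),
      dif_neg (by omega)] at h
    linarith
  -- sum of nuvec is 0
  have hnu0 : ∑ i, nuvec d ε i = 0 := by
    have : ∑ i, nuvec d ε i = ∑ i ∈ Finset.range d, (if i < d / 2 then ε else -ε) := by
      rw [← Fin.sum_univ_eq_sum_range]
      rfl
    rw [this, Finset.range_eq_Ico,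
      ← Finset.sum_Ico_consecutive _ (Nat.zero_le (d / 2)) (Nat.div_le_self d 2)]
    have c1 : ∀ i ∈ Finset.Ico 0 (d / 2), (if i < d / 2 then ε else -ε) = ε := by
      intro i hi; rw [if_pos (Finset.mem_Ico.mp hi).2]
    have c2 : ∀ i ∈ Finset.Ico (d / 2) d, (if i < d / 2 then ε else -ε) = -ε := by
      intro i hi
      have := (Finset.mem_Ico.mp hi).1
      rw [if_neg (by omega)]
    rw [Finset.sum_congr rfl c1, Finset.sum_congr rfl c2, Finset.sum_const,
      Finset.sum_const, Nat.card_Ico, Nat.card_Ico, hd2, nsmul_eq_mul, nsmul_eq_mul]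
    have : d - m = m := by omega
    rw [this]
    simp only [Nat.sub_zero]
    ring
  have hysum : ∑ i, (x i - nuvec d ε i) = 1 := by
    rw [Finset.sum_sub_distrib, hsum, hnu0]; ring
  have hne : Nonempty (Fin d) := ⟨⟨0, hd⟩⟩
  refine ⟨⟨⟨?_, ?_, hysum⟩, ?_⟩, ?_⟩
  · -- monotonicity
    intro i j hij
    have hij' : (i : ℕ) ≤ (j : ℕ) := hij
    simp only [nuvec]
    by_cases hi : (i : ℕ) < d / 2
    · by_cases hj : (j : ℕ) < d / 2
      · rw [if_pos hi, if_pos hj]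
        have := hdec i j hij; linarith
      · rw [if_pos hi, if_neg hj]
        have hxi : x ⟨m - 1, by omega⟩ ≤ x i :=
          hdec i ⟨m - 1, by omega⟩ (by simp only [Fin.le_def]; omega)
        have hxj : x j ≤ x ⟨m, by omega⟩ :=
          hdec ⟨m, by omega⟩ j (by simp only [Fin.le_def]; omega)
        linarith
    · have hj : ¬ (j : ℕ) < d / 2 := by omega
      rw [if_neg hi, if_neg hj]
      have := hdec i j hij; linarith
  · -- nonnegativity
    intro i
    simp only [nuvec]
    by_cases hi : (i : ℕ) < d / 2
    · rw [if_pos hi]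
      have : x ⟨d - 1, by omega⟩ ≤ x i :=
        hdec i ⟨d - 1, by omega⟩ (by simp only [Fin.le_def]; omega)
      linarith
    · rw [if_neg hi]
      have := hnn i; linarith
  · -- distance bound
    refine ciSup_le fun i => ?_
    have e : (x i - nuvec d ε i) - x i = -(nuvec d ε i) := by ring
    rw [e, abs_neg]
    simp only [nuvec]
    by_cases hi : (i : ℕ) < d / 2
    · rw [if_pos hi, abs_of_pos hε]
    · rw [if_neg hi, abs_neg, abs_of_pos hε]
  · -- majorization
    intro x' hx' hdist
    have hpt : ∀ i, |x' i - x i| ≤ ε := by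
      intro i
      rw [dInf] at hdist
      exact le_trans (le_ciSup (f := fun i => |x' i - x i|)
        (Set.Finite.bddAbove (Set.finite_range _)) i) hdist
    intro k
    unfold psum
    by_cases hk : k ≤ d / 2
    · apply Finset.sum_le_sum
      intro i hi
      have hik : (i : ℕ) < k := (Finset.mem_filter.mp hi).2
      have h := (abs_le.mp (hpt i)).1
      simp only [nuvec, if_pos (by omega : (i : ℕ) < d / 2)]
      linarith
    · have hsplit := Finset.sum_filter_add_sum_filter_not Finset.univ
        (fun i : Fin d => (i : ℕ) < k) (fun i => x i - nuvec d ε i)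
      have hsplit' := Finset.sum_filter_add_sum_filter_not Finset.univ
        (fun i : Fin d => (i : ℕ) < k) x'
      have hx'sum : ∑ i, x' i = 1 := hx'.2.2
      have hcompl : ∑ i ∈ Finset.univ.filter (fun i : Fin d => ¬ (i : ℕ) < k), x' i ≤
          ∑ i ∈ Finset.univ.filter (fun i : Fin d => ¬ (i : ℕ) < k),
            (x i - nuvec d ε i) := by
        apply Finset.sum_le_sum
        intro i hi
        have hik : ¬ (i : ℕ) < k := (Finset.mem_filter.mp hi).2
        simp only [nuvec, if_neg (by omega : ¬ (i : ℕ) < d / 2)]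
        have h := (abs_le.mp (hpt i)).2
        linarith
      simp only at hsplit hsplit' hcompl ⊢
      linarith [hsplit, hsplit', hcompl, hysum, hx'sum]
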